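/- arXiv:2502.15967 — 3 statements merged into one kernel-verified Lean document; each statement's English description precedes it below -/
import Mathlib

section
/- Let G be a finite group, A ≤ Aut(G), and let x, y ∈ G be elements of prime order p such that x^A and y^A lie in the same connected component of Δ(G,A). Then either both C_G(x) and C_G(y) are not p-groups, or ⟨x⟩ = ⟨y⟩^a for some a ∈ A. -/
/-!
Suppose `C_G(y)` is a `p`-group. Then "some element of the orbit has a power equal to `y`"
propagates along the edges of `Δ(G,A)`: if `y ∈ ⟨z⟩` and `⟨z^b, w⟩` is cyclic, then `w` centralizes
`y^b`, so `w ≠ 1` is a `p`-element, and in the cyclic group `⟨z^b, w⟩` the subgroup of order `p`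
is unique, whence `y^b ∈ ⟨w⟩`. At the orbit of `x` this gives `y ∈ ⟨x^d⟩`, and since both have
order `p`, `⟨y⟩ = ⟨x⟩^d`. If instead `C_G(x)` is a `p`-group, exchange `x` and `y`.
-/

open Subgroup

/-- The A-orbit of x under a subgroup A of Aut(G). -/
def aorb {G : Type*} [Group G] (A : Subgroup (MulAut G)) (x : G) : Set G :=
  {y | ∃ a ∈ A, a x = y}

/-- The vertex set of the automorphic cyclic graph: A-orbits of nontrivial elements. -/
def DeltaVerts (G : Type*) [Group G] (A : Subgroup (MulAut G)) :=
  {S : Set G // ∃ x : G, x ≠ 1 ∧ S = aorb A x}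

/-- The automorphic cyclic graph Δ(G,A). -/
def Delta (G : Type*) [Group G] (A : Subgroup (MulAut G)) :
    SimpleGraph (DeltaVerts G A) where
  Adj S T := S ≠ T ∧ ∃ x ∈ S.1, ∃ y ∈ T.1,
    IsCyclic (Subgroup.closure {x, y} : Subgroup G)
  symm := by
    constructor
    rintro S T ⟨hne, x, hx, y, hy, hc⟩
    exact ⟨hne.symm, y, hy, x, hx, by rwa [Set.pair_comm]⟩
  loopless := ⟨fun S h => h.1 rfl⟩

/-- The vertex corresponding to the A-orbit of a nontrivial element x. -/
def vtx {G : Type*} [Group G] (A : Subgroup (MulAut G)) (x : G) (hx : x ≠ 1) :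
    DeltaVerts G A :=
  ⟨aorb A x, x, hx, rfl⟩

theorem SimpleGraph.Reachable.of_adj_imp {V : Type*} {Γ : SimpleGraph V} {P : V → Prop}
    (hP : ∀ ⦃u v⦄, Γ.Adj u v → P u → P v) {u v : V} (huv : Γ.Reachable u v) (hu : P u) :
    P v := by
  obtain ⟨w⟩ := huv
  induction w with
  | nil => exact hu
  | cons had _ ih => exact ih (hP had hu)

namespace Subgroup

variable {G : Type*} [Group G]

theorem apply_mem_zpowers {H F : Type*} [Group H] [FunLike F G H] [MonoidHomClass F G H] (f : F)
    {u v : G} (h : u ∈ zpowers v) : f u ∈ zpowers (f v) := by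
  obtain ⟨k, rfl⟩ := mem_zpowers_iff.mp h
  exact ⟨k, (map_zpow f v k).symm⟩

theorem mem_zpowers_of_orderOf_dvd {H : Subgroup G} [Finite H] [IsCyclic H] {u w : G}
    (hu : u ∈ H) (hw : w ∈ H) (h : orderOf u ∣ orderOf w) : u ∈ zpowers w := by
  classical
  have := Fintype.ofFinite H
  set u' : H := ⟨u, hu⟩
  set w' : H := ⟨w, hw⟩
  have hdvd : orderOf u' ∣ orderOf w' := by simpa [u', w'] using h
  -- `zpowers w'` consists of `orderOf w'` roots of `a ^ orderOf w' = 1`, and a cyclic group has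
  -- no more roots than that.
  have hroots : (zpowers w' : Set H).toFinset = ({a | a ^ orderOf w' = 1} : Finset H) := by
    refine Finset.eq_of_subset_of_card_le ?_ ?_
    · intro a ha
      simpa using orderOf_dvd_iff_pow_eq_one.mp (orderOf_dvd_of_mem_zpowers (by simpa using ha))
    · simpa only [Set.toFinset_card, SetLike.coe_sort_coe, Fintype.card_zpowers] using
        IsCyclic.card_pow_eq_one_le (orderOf_pos w')
  have hu' : u' ∈ zpowers w' := by
    rw [← SetLike.mem_coe, ← Set.mem_toFinset, hroots]
    simpa using orderOf_dvd_iff_pow_eq_one.mp hdvd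
  simpa [MonoidHom.map_zpowers] using mem_map_of_mem H.subtype hu'

theorem zpowers_eq_zpowers_of_mem_of_orderOf_eq [Finite G] {u v : G} (h : u ∈ zpowers v)
    (ho : orderOf u = orderOf v) : zpowers u = zpowers v :=
  eq_of_le_of_card_ge (zpowers_le.mpr h) (by rw [Nat.card_zpowers, Nat.card_zpowers, ho])

theorem map_centralizer_singleton {G' : Type*} [Group G'] (e : G ≃* G') (x : G) :
    (centralizer {x}).map e.toMonoidHom = centralizer {e x} := by
  ext g
  rw [mem_map_equiv, mem_centralizer_singleton_iff, mem_centralizer_singleton_iff,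
    ← e.injective.eq_iff, map_mul, map_mul, e.apply_symm_apply]

theorem mem_zpowers_of_isPGroup_centralizer [Finite G] {p : ℕ} [Fact p.Prime] {u z w : G}
    (hu : orderOf u = p) (hC : IsPGroup p (centralizer {u})) (huz : u ∈ zpowers z)
    (hcyc : IsCyclic (closure {z, w})) (hw : w ≠ 1) : u ∈ zpowers w := by
  have hzH : z ∈ closure {z, w} := subset_closure (by simp)
  have hwH : w ∈ closure {z, w} := subset_closure (by simp)
  have hzw : z ∈ centralizer {w} := by
    let := hcyc.commGroup
    exact mem_centralizer_singleton_iff.mpr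
      (congrArg Subtype.val (mul_comm (⟨z, hzH⟩ : closure {z, w}) ⟨w, hwH⟩))
  have hwC : w ∈ centralizer {u} := mem_centralizer_singleton_iff.mpr
    (mem_centralizer_singleton_iff.mp (zpowers_le.mpr hzw huz)).symm
  obtain ⟨k, hk⟩ := IsPGroup.iff_orderOf.mp hC ⟨w, hwC⟩
  rw [orderOf_mk] at hk
  have hk0 : k ≠ 0 := by
    rintro rfl
    exact hw (orderOf_eq_one_iff.mp hk)
  refine mem_zpowers_of_orderOf_dvd (zpowers_le.mpr hzH huz) hwH ?_
  rw [hu, hk]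
  exact dvd_pow_self p hk0

end Subgroup

namespace DeltaVerts

variable {G : Type*} [Group G] {A : Subgroup (MulAut G)}

theorem exists_apply_eq (S : DeltaVerts G A) {z z' : G} (hz : z ∈ S.1) (hz' : z' ∈ S.1) :
    ∃ b ∈ A, b z = z' := by
  obtain ⟨x, -, hS⟩ := S.2
  rw [hS] at hz hz'
  obtain ⟨a, ha, rfl⟩ := hz
  obtain ⟨b, hb, rfl⟩ := hz'
  exact ⟨b * a⁻¹, mul_mem hb (inv_mem ha), by simp [MulAut.mul_apply]⟩

theorem apply_mem (S : DeltaVerts G A) {z : G} (hz : z ∈ S.1) {a : MulAut G} (ha : a ∈ A) :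
    a z ∈ S.1 := by
  obtain ⟨x, -, hS⟩ := S.2
  rw [hS] at hz ⊢
  obtain ⟨b, hb, rfl⟩ := hz
  exact ⟨a * b, mul_mem ha hb, rfl⟩

theorem ne_one (S : DeltaVerts G A) {z : G} (hz : z ∈ S.1) : z ≠ 1 := by
  obtain ⟨x, hx, hS⟩ := S.2
  rw [hS] at hz
  obtain ⟨a, -, rfl⟩ := hz
  exact (map_ne_one_iff a a.injective).mpr hx

end DeltaVerts

namespace Delta

variable {G : Type*} [Group G] [Finite G] {A : Subgroup (MulAut G)} {p : ℕ} [Fact p.Prime]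

theorem exists_mem_zpowers_of_adj {y : G} (hy : orderOf y = p)
    (hC : IsPGroup p (centralizer {y})) {S T : DeltaVerts G A} (hST : (Delta G A).Adj S T)
    (hS : ∃ z ∈ S.1, y ∈ zpowers z) : ∃ w ∈ T.1, y ∈ zpowers w := by
  obtain ⟨-, z', hz', w, hw, hcyc⟩ := hST
  obtain ⟨z, hz, hyz⟩ := hS
  obtain ⟨b, hb, rfl⟩ := S.exists_apply_eq hz hz'
  have hby : b y ∈ zpowers w :=
    mem_zpowers_of_isPGroup_centralizer (b.orderOf_eq y ▸ hy)
      (map_centralizer_singleton b y ▸ hC.map _) (apply_mem_zpowers b hyz) hcyc (T.ne_one hw)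
  exact ⟨b⁻¹ w, T.apply_mem hw (inv_mem hb), by simpa using apply_mem_zpowers b⁻¹ hby⟩

theorem exists_zpowers_eq_map_of_reachable {x y : G} (hx : x ≠ 1) (hy : y ≠ 1)
    (hxo : orderOf x = p) (hyo : orderOf y = p) (hC : IsPGroup p (centralizer {y}))
    (hreach : (Delta G A).Reachable (vtx A y hy) (vtx A x hx)) :
    ∃ a ∈ A, zpowers x = (zpowers y).map a.toMonoidHom := by
  obtain ⟨-, ⟨d, hd, rfl⟩, hyz⟩ := hreach.of_adj_imp
    (fun _ _ hST hS => exists_mem_zpowers_of_adj hyo hC hST hS)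
    ⟨y, ⟨1, one_mem A, rfl⟩, mem_zpowers y⟩
  have hdy : d⁻¹ y ∈ zpowers x := by simpa using apply_mem_zpowers d⁻¹ hyz
  refine ⟨d⁻¹, inv_mem hd, ?_⟩
  rw [MonoidHom.map_zpowers]
  exact (zpowers_eq_zpowers_of_mem_of_orderOf_eq hdy (by rw [MulEquiv.orderOf_eq, hxo, hyo])).symm

end Delta

theorem stmt1 {G : Type*} [Group G] [Finite G] (A : Subgroup (MulAut G))
    (p : ℕ) (hp : p.Prime) (x y : G) (hx : x ≠ 1) (hy : y ≠ 1)
    (hxo : orderOf x = p) (hyo : orderOf y = p)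
    (hreach : (Delta G A).Reachable (vtx A x hx) (vtx A y hy)) :
    (¬ IsPGroup p (Subgroup.centralizer {x}) ∧ ¬ IsPGroup p (Subgroup.centralizer {y})) ∨
      ∃ a ∈ A, Subgroup.zpowers x = Subgroup.map a.toMonoidHom (Subgroup.zpowers y) := by
  have := Fact.mk hp
  by_cases hCy : IsPGroup p (Subgroup.centralizer {y})
  · exact .inr (Delta.exists_zpowers_eq_map_of_reachable hx hy hxo hyo hCy hreach.symm)
  by_cases hCx : IsPGroup p (Subgroup.centralizer {x})
  · obtain ⟨a, ha, hya⟩ := Delta.exists_zpowers_eq_map_of_reachable hy hx hyo hxo hCx hreach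
    exact .inr ⟨a⁻¹, inv_mem ha, ((Subgroup.map_symm_eq_iff_map_eq _).mpr hya.symm).symm⟩
  · exact .inl ⟨hCx, hCy⟩
end

section
/- Let G be a finite p-group and A ≤ Aut(G). If A does not act transitively on the set of subgroups of G of order p, then Δ(G,A) is disconnected. -/
/-!
A cyclic group has at most one subgroup of each order, and for `x ≠ 1` in the `p`-group `G` the
group `⟨x⟩` has one of order `p`. So if `⟨x', y'⟩` is cyclic, the order-`p` subgroups of `⟨x'⟩`
and `⟨y'⟩` coincide; since an automorphism `a` carries the order-`p` subgroup of `⟨x⟩` to that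
of `⟨a x⟩`, the `A`-orbit of this subgroup is constant on the connected components of `Δ(G, A)`.
Two order-`p` subgroups in different `A`-orbits thus give vertices in different components.
-/

open Subgroup

open scoped Pointwise

theorem IsCyclic.subgroup_eq_of_card_eq {α : Type*} [Group α] [Finite α] [IsCyclic α]
    {H K : Subgroup α} (h : Nat.card H = Nat.card K) : H = K := by
  classical
  have := Fintype.ofFinite α
  suffices key : ∀ L : Subgroup α, Nat.card L = Nat.card H →
      (L : Set α) = ↑({a | a ^ Nat.card H = 1} : Finset α) from
    SetLike.coe_injective ((key H rfl).trans (key K h.symm).symm)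
  intro L hL
  refine Set.eq_of_subset_of_ncard_le (fun a ha => ?_) ?_ (Finset.finite_toSet _)
  · have := congrArg Subtype.val (pow_card_eq_one' (G := L) (x := ⟨a, ha⟩))
    rw [hL] at this
    simpa using this
  · rw [Set.ncard_coe_finset, ← Nat.card_coe_set_eq, SetLike.coe_sort_coe, hL]
    exact IsCyclic.card_pow_eq_one_le Nat.card_pos

section

variable {G : Type*} [Group G]

theorem Subgroup.eq_of_card_eq_of_le_of_isCyclic {K S T : Subgroup G} [Finite K] [IsCyclic K]
    (hS : S ≤ K) (hT : T ≤ K) (h : Nat.card S = Nat.card T) : S = T := by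
  have hK : S.subgroupOf K = T.subgroupOf K := IsCyclic.subgroup_eq_of_card_eq <| by
    rw [Nat.card_congr (subgroupOfEquivOfLe hS).toEquiv,
      Nat.card_congr (subgroupOfEquivOfLe hT).toEquiv, h]
  rwa [subgroupOf_inj, inf_of_le_left hS, inf_of_le_left hT] at hK

theorem IsPGroup.exists_le_zpowers_card_eq {p : ℕ} [Fact p.Prime] [Finite G]
    (hG : IsPGroup p G) {x : G} (hx : x ≠ 1) : ∃ S ≤ zpowers x, Nat.card S = p := by
  have : Nontrivial (zpowers x) := (nontrivial_iff_ne_bot _).mpr (zpowers_ne_bot.mpr hx)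
  obtain ⟨n, hn, hcard⟩ := ((hG.to_subgroup _).nontrivial_iff_card).mp this
  obtain ⟨g, hg⟩ := exists_prime_orderOf_dvd_card' (G := zpowers x) p
    (hcard ▸ dvd_pow_self p hn.ne')
  exact ⟨zpowers (g : G), zpowers_le.mpr g.2, by rw [Nat.card_zpowers, orderOf_coe, hg]⟩

theorem exists_zpowers_eq_of_card_eq_prime {p : ℕ} [Fact p.Prime] {S : Subgroup G}
    (hS : Nat.card S = p) : ∃ x ≠ 1, zpowers x = S := by
  have := isCyclic_of_prime_card hS
  obtain ⟨x, hx⟩ := (S.isCyclic_iff_exists_zpowers_eq_top).mp this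
  refine ⟨x, ?_, hx⟩
  rintro rfl
  rw [zpowers_one_eq_bot] at hx
  rw [← hx, card_bot] at hS
  exact (Fact.out : p.Prime).one_lt.ne hS

variable {A : Subgroup (MulAut G)}

theorem mem_aorb_self (x : G) : x ∈ aorb A x := ⟨1, A.one_mem, rfl⟩

namespace DeltaVerts

theorem ne_one_of_mem {V : DeltaVerts G A} {x : G} (hx : x ∈ V.1) : x ≠ 1 := by
  obtain ⟨z, hz, hV⟩ := V.2
  rw [hV] at hx
  obtain ⟨a, -, rfl⟩ := hx
  simpa using hz

theorem exists_apply_eq_of_mem {V : DeltaVerts G A} {x y : G} (hx : x ∈ V.1) (hy : y ∈ V.1) :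
    ∃ a ∈ A, a x = y := by
  obtain ⟨z, -, hV⟩ := V.2
  rw [hV] at hx hy
  obtain ⟨b, hb, rfl⟩ := hx
  obtain ⟨c, hc, rfl⟩ := hy
  exact ⟨c * b⁻¹, mul_mem hc (inv_mem hb), by simp⟩

theorem exists_mem (V : DeltaVerts G A) : ∃ x, x ∈ V.1 := by
  obtain ⟨z, -, hV⟩ := V.2
  exact ⟨z, hV ▸ mem_aorb_self z⟩

end DeltaVerts

variable (A) in
def orbitClass (S : Subgroup G) : MulAction.orbitRel.Quotient A (Subgroup G) :=
  Quotient.mk _ S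

theorem orbitClass_smul {a : MulAut G} (ha : a ∈ A) (S : Subgroup G) :
    orbitClass A (a • S) = orbitClass A S :=
  Quotient.sound ⟨⟨a, ha⟩, rfl⟩

theorem exists_map_eq_of_orbitClass_eq {S T : Subgroup G} (h : orbitClass A S = orbitClass A T) :
    ∃ a ∈ A, S.map a.toMonoidHom = T := by
  obtain ⟨⟨a, ha⟩, hST⟩ := Quotient.exact h.symm
  exact ⟨a, ha, hST⟩

variable [Finite G]

theorem orbitClass_eq_of_mem {V : DeltaVerts G A} {x y : G} (hx : x ∈ V.1) (hy : y ∈ V.1)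
    {S T : Subgroup G} (hS : S ≤ zpowers x) (hT : T ≤ zpowers y) (h : Nat.card S = Nat.card T) :
    orbitClass A S = orbitClass A T := by
  obtain ⟨a, ha, rfl⟩ := DeltaVerts.exists_apply_eq_of_mem hx hy
  have haS : a • S ≤ zpowers (a x) :=
    (map_mono hS).trans_eq (MonoidHom.map_zpowers a.toMonoidHom x)
  have hcard : Nat.card (a • S : Subgroup G) = Nat.card T :=
    (card_map_of_injective a.injective).trans h
  rw [← orbitClass_smul ha, eq_of_card_eq_of_le_of_isCyclic haS hT hcard]

variable {p : ℕ} [Fact p.Prime]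

theorem orbitClass_eq_of_adj (hG : IsPGroup p G) {U V : DeltaVerts G A} (hUV : (Delta G A).Adj U V)
    {x y : G} (hx : x ∈ U.1) (hy : y ∈ V.1) {S T : Subgroup G} (hS : S ≤ zpowers x)
    (hT : T ≤ zpowers y) (hSp : Nat.card S = p) (hTp : Nat.card T = p) :
    orbitClass A S = orbitClass A T := by
  obtain ⟨-, x', hx', y', hy', hcyc⟩ := hUV
  obtain ⟨S', hS', hS'p⟩ := hG.exists_le_zpowers_card_eq (DeltaVerts.ne_one_of_mem hx')
  obtain ⟨T', hT', hT'p⟩ := hG.exists_le_zpowers_card_eq (DeltaVerts.ne_one_of_mem hy')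
  have hx'K : zpowers x' ≤ closure {x', y'} := zpowers_le.mpr (subset_closure (by simp))
  have hy'K : zpowers y' ≤ closure {x', y'} := zpowers_le.mpr (subset_closure (by simp))
  have hS'T' : S' = T' := eq_of_card_eq_of_le_of_isCyclic (hS'.trans hx'K) (hT'.trans hy'K)
    (hS'p.trans hT'p.symm)
  calc orbitClass A S = orbitClass A S' := orbitClass_eq_of_mem hx hx' hS hS' (hSp.trans hS'p.symm)
    _ = orbitClass A T' := by rw [hS'T']
    _ = orbitClass A T := orbitClass_eq_of_mem hy' hy hT' hT (hT'p.trans hTp.symm)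

theorem orbitClass_eq_of_reachable (hG : IsPGroup p G) {U V : DeltaVerts G A}
    (hUV : (Delta G A).Reachable U V) {x y : G} (hx : x ∈ U.1) (hy : y ∈ V.1) {S T : Subgroup G}
    (hS : S ≤ zpowers x) (hT : T ≤ zpowers y) (hSp : Nat.card S = p) (hTp : Nat.card T = p) :
    orbitClass A S = orbitClass A T := by
  obtain ⟨w⟩ := hUV
  induction w generalizing x S with
  | nil => exact orbitClass_eq_of_mem hx hy hS hT (hSp.trans hTp.symm)
  | @cons U W V hUW _ ih =>
    obtain ⟨z, hz⟩ := W.exists_mem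
    obtain ⟨S', hS', hS'p⟩ := hG.exists_le_zpowers_card_eq (DeltaVerts.ne_one_of_mem hz)
    exact (orbitClass_eq_of_adj hG hUW hx hz hS hS' hSp hS'p).trans (ih hz hy hS' hS'p)

end

theorem stmt3 {G : Type*} [Group G] [Finite G] (A : Subgroup (MulAut G))
    (p : ℕ) (hp : p.Prime) (hG : IsPGroup p G)
    (htrans : ¬ ∀ S T : Subgroup G, Nat.card S = p → Nat.card T = p →
        ∃ a ∈ A, Subgroup.map a.toMonoidHom S = T) :
    ¬ (Delta G A).Connected := by
  have := Fact.mk hp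
  refine fun hconn => htrans fun S T hSp hTp => exists_map_eq_of_orbitClass_eq ?_
  obtain ⟨x, hx, hxS⟩ := exists_zpowers_eq_of_card_eq_prime hSp
  obtain ⟨y, hy, hyT⟩ := exists_zpowers_eq_of_card_eq_prime hTp
  exact orbitClass_eq_of_reachable hG (hconn.preconnected (vtx A x hx) (vtx A y hy))
    (mem_aorb_self x) (mem_aorb_self y) hxS.ge hyT.ge hSp hTp
end

section
/- Let G be a finite group with A ≤ Aut(G), and suppose Z(G) is not a p-group for any prime p (i.e., |Z(G)| is divisible by at least two distinct primes). Then Δ(G,A) is connected and its diameter is at most 4. -/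
/-!
By Cauchy's theorem the centre contains elements `a` and `b` of distinct prime orders `p` and `q`.
Two commuting elements of coprime orders generate a cyclic group, so the orbits of `a` and `b`
are adjacent. Every nontrivial `g` is then within distance two of the orbit of `b`: if `p` divides
the order of `g`, go through the element `g ^ (|g| / p)` of order `p`, which lies in `⟨g⟩` and
commutes with `b`; otherwise `g` itself is joined to `a`. Two such paths give diameter at most four.
-/

open Subgroup

theorem SimpleGraph.connected_and_dist_le_of_forall_walk_length_le {V : Type*}
    {Γ : SimpleGraph V} (w : V) {n : ℕ} (h : ∀ v, ∃ p : Γ.Walk v w, p.length ≤ n) :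
    Γ.Connected ∧ ∀ u v, Γ.dist u v ≤ 2 * n := by
  have hreach (v : V) : Γ.Reachable v w := let ⟨p, _⟩ := h v; ⟨p⟩
  have : Nonempty V := ⟨w⟩
  refine ⟨⟨fun u v => (hreach u).trans (hreach v).symm⟩, fun u v => ?_⟩
  obtain ⟨p, hp⟩ := h u
  obtain ⟨q, hq⟩ := h v
  calc Γ.dist u v ≤ (p.append q.reverse).length := dist_le _
    _ = p.length + q.length := by simp
    _ ≤ 2 * n := by omega

section CyclicClosure

variable {G : Type*} [Group G]

theorem Commute.mem_zpowers_mul_of_coprime {x y : G} (hc : Commute x y)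
    (hco : (orderOf x).Coprime (orderOf y)) : x ∈ zpowers (x * y) := by
  obtain ⟨m, hm⟩ := exists_pow_eq_self_of_coprime hco.symm
  have hpow : (x * y) ^ orderOf y = x ^ orderOf y := by
    rw [hc.mul_pow, pow_orderOf_eq_one, mul_one]
  simpa only [hpow, hm] using pow_mem (pow_mem (mem_zpowers (x * y)) (orderOf y)) m

theorem Commute.isCyclic_closure_pair_of_coprime {x y : G} (hc : Commute x y)
    (hco : (orderOf x).Coprime (orderOf y)) : IsCyclic (closure ({x, y} : Set G)) := by
  refine isCyclic_of_le (H' := zpowers (x * y)) ?_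
  rw [closure_le, Set.insert_subset_iff, Set.singleton_subset_iff]
  refine ⟨hc.mem_zpowers_mul_of_coprime hco, ?_⟩
  rw [hc.eq]
  exact hc.symm.mem_zpowers_mul_of_coprime hco.symm

theorem isCyclic_closure_pair_pow (g : G) (n : ℕ) : IsCyclic (closure ({g, g ^ n} : Set G)) := by
  refine isCyclic_of_le (H' := zpowers g) ?_
  rw [closure_le, Set.insert_subset_iff, Set.singleton_subset_iff]
  exact ⟨mem_zpowers g, pow_mem (mem_zpowers g) n⟩

end CyclicClosure

section DeltaGraph

variable {G : Type*} [Group G] (A : Subgroup (MulAut G))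

theorem self_mem_vtx (x : G) (hx : x ≠ 1) : x ∈ (vtx A x hx).1 := ⟨1, A.one_mem, rfl⟩

theorem DeltaVerts.exists_eq_vtx (u : DeltaVerts G A) : ∃ (x : G) (hx : x ≠ 1), u = vtx A x hx := by
  obtain ⟨S, x, hx, rfl⟩ := u
  exact ⟨x, hx, rfl⟩

theorem Delta.exists_walk_length_le_one {x y : G} (hx : x ≠ 1) (hy : y ≠ 1)
    (hc : IsCyclic (closure ({x, y} : Set G))) :
    ∃ p : (Delta G A).Walk (vtx A x hx) (vtx A y hy), p.length ≤ 1 := by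
  by_cases he : vtx A x hx = vtx A y hy
  · rw [he]
    exact ⟨.nil, by simp⟩
  · have hadj : (Delta G A).Adj (vtx A x hx) (vtx A y hy) :=
      ⟨he, x, self_mem_vtx A x hx, y, self_mem_vtx A y hy, hc⟩
    exact ⟨hadj.toWalk, by simp⟩

theorem Delta.exists_walk_length_le_two [Finite G] {a b : G} {p : ℕ} (hp : p.Prime)
    (ha : a ∈ center G) (hb : b ∈ center G) (hoa : orderOf a = p) (hpb : p.Coprime (orderOf b))
    (hb1 : b ≠ 1) (g : G) (hg : g ≠ 1) :
    ∃ w : (Delta G A).Walk (vtx A g hg) (vtx A b hb1), w.length ≤ 2 := by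
  by_cases hpg : p ∣ orderOf g
  · set c := g ^ (orderOf g / p)
    have hoc : orderOf c = p := orderOf_pow_orderOf_div (orderOf_pos g).ne' hpg
    have hc1 : c ≠ 1 := orderOf_eq_one_iff.not.mp (hoc ▸ hp.ne_one)
    obtain ⟨w₁, hw₁⟩ := exists_walk_length_le_one A hg hc1 (isCyclic_closure_pair_pow g _)
    obtain ⟨w₂, hw₂⟩ := exists_walk_length_le_one A hc1 hb1
      (Commute.isCyclic_closure_pair_of_coprime (mem_center_iff.mp hb c) (hoc ▸ hpb))
    exact ⟨w₁.append w₂, by simp only [SimpleGraph.Walk.length_append]; omega⟩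
  · have ha1 : a ≠ 1 := orderOf_eq_one_iff.not.mp (hoa ▸ hp.ne_one)
    obtain ⟨w₁, hw₁⟩ := exists_walk_length_le_one A hg ha1
      (Commute.isCyclic_closure_pair_of_coprime (mem_center_iff.mp ha g)
        (hoa ▸ (hp.coprime_iff_not_dvd.mpr hpg).symm))
    obtain ⟨w₂, hw₂⟩ := exists_walk_length_le_one A ha1 hb1
      (Commute.isCyclic_closure_pair_of_coprime (mem_center_iff.mp hb a) (hoa ▸ hpb))
    exact ⟨w₁.append w₂, by simp only [SimpleGraph.Walk.length_append]; omega⟩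

end DeltaGraph

theorem stmt4 {G : Type*} [Group G] [Finite G] (A : Subgroup (MulAut G))
    (h : ∃ p q : ℕ, p.Prime ∧ q.Prime ∧ p ≠ q ∧
        p ∣ Nat.card (Subgroup.center G) ∧ q ∣ Nat.card (Subgroup.center G)) :
    (Delta G A).Connected ∧ ∀ u v : DeltaVerts G A, (Delta G A).dist u v ≤ 4 := by
  obtain ⟨p, q, hp, hq, hpq, hdp, hdq⟩ := h
  have : Fact p.Prime := ⟨hp⟩
  have : Fact q.Prime := ⟨hq⟩
  obtain ⟨a, hoa⟩ := exists_prime_orderOf_dvd_card' (G := center G) p hdp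
  obtain ⟨b, hob⟩ := exists_prime_orderOf_dvd_card' (G := center G) q hdq
  rw [← orderOf_submonoid] at hoa hob
  have hb1 : (b : G) ≠ 1 := orderOf_eq_one_iff.not.mp (hob ▸ hq.ne_one)
  have hpb : p.Coprime (orderOf (b : G)) := hob ▸ (Nat.coprime_primes hp hq).mpr hpq
  refine SimpleGraph.connected_and_dist_le_of_forall_walk_length_le (n := 2) (vtx A b hb1) fun v => ?_
  obtain ⟨g, hg, rfl⟩ := v.exists_eq_vtx
  exact Delta.exists_walk_length_le_two A hp a.2 b.2 hoa hpb hb1 g hg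
end
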